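/- Let −∞ ≤ a < b ≤ ∞ and let I be one of the intervals (a,b), (a,b], [a,b), [a,b]. Let λ₁, λ₂ : I → ℂ be continuous and let A(t) be the diagonal matrix with entries λ₁(t), λ₂(t). Suppose that κ₁₂(t) := ∫_a^t e^{∫_s^t max{Re λ₁(τ), Re λ₂(τ)} dτ} ds exists (as a finite, possibly improper, integral) for all t ∈ I, and that K₁₂ := sup_{t∈I} κ₁₂(t) < ∞. Then the system x' = A(t)x is Ulam stable on I with Ulam constant K₁₂ (with respect to the maximum norm on ℂ²). Furthermore, if in addition lim_{t→a⁺} ∫_t^{t₀} min{−Re λ₁(s), −Re λ₂(s)} ds = ∞ for t₀ ∈ (a,b), then for every ε > 0 and every continuously differentiable φ : I → ℂ² with sup_{t∈I} ‖φ'(t) − A(t)φ(t)‖∞ ≤ ε, there exists a unique solution x of x' = A(t)x satisfying sup_{t∈I} ‖φ(t) − x(t)‖∞ ≤ K₁₂ε. -/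

import Mathlib

open MeasureTheory Filter Set

noncomputable section

/-- Ulam stability on `I` with constant `K` for the system `x' = A(t) x` on `ℂ²`,
with respect to the maximum norm (the sup norm on `Fin 2 → ℂ`). -/
def UlamStable2C (I : Set ℝ) (A : ℝ → Matrix (Fin 2) (Fin 2) ℂ) (K : ℝ) : Prop :=
  0 < K ∧
  ∀ ε : ℝ, 0 < ε →
    ∀ φ φd : ℝ → Fin 2 → ℂ,
      (∀ t ∈ I, HasDerivWithinAt φ (φd t) I t) →
      ContinuousOn φd I →
      (∀ t ∈ I, ‖φd t - (A t).mulVec (φ t)‖ ≤ ε) →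
      ∃ x : ℝ → Fin 2 → ℂ,
        (∀ t ∈ I, HasDerivWithinAt x ((A t).mulVec (x t)) I t) ∧
        ∀ t ∈ I, ‖φ t - x t‖ ≤ K * ε

/-- `κ₁₂(t) = ∫_a^t exp(∫_s^t max (Re λ₁) (Re λ₂) dτ) ds`. -/
def kappa12 (a : EReal) (l1 l2 : ℝ → ℂ) (t : ℝ) : ℝ :=
  ∫ s in {s : ℝ | a < (s : EReal) ∧ s < t},
    Real.exp (∫ τ in s..t, max ((l1 τ).re) ((l2 τ).re))

open Topology

/-!
Both coordinates decouple into scalar equations `z' = λ z`. For a primitive `Λ` of `λ` and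
`g = (φ' - λ φ) e^{-Λ}`, the function `φ e^{-Λ} - ∫_a^t g` is constant, say `c`; then `c e^{Λ}` is a
solution with `|φ(t) - c e^{Λ(t)}| = e^{Re Λ(t)} |∫_a^t g| ≤ ε κ₁₂(t)`, because
`Re Λ(t) - Re Λ(s) ≤ ∫_s^t max (Re λ₁) (Re λ₂)`.
Uniqueness: the difference of two such solutions is a bounded solution `z(t₀) e^{Λ(t) - Λ(t₀)}`,
whereas `Re Λ(t) → ∞` as `t → a⁺`, so it vanishes.
-/

theorem EReal.ordConnected_of_Ioo_subset_subset_Icc {a b : EReal} {I : Set ℝ}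
    (hI1 : ∀ x : ℝ, a < (x : EReal) → (x : EReal) < b → x ∈ I)
    (hI2 : ∀ x ∈ I, a ≤ (x : EReal) ∧ (x : EReal) ≤ b) : I.OrdConnected := by
  refine ⟨fun x hx y hy z hz => ?_⟩
  rcases hz.1.eq_or_lt with rfl | hxz
  · exact hx
  rcases hz.2.eq_or_lt with rfl | hzy
  · exact hy
  exact hI1 z ((hI2 x hx).1.trans_lt (EReal.coe_lt_coe_iff.2 hxz))
    ((EReal.coe_lt_coe_iff.2 hzy).trans_le (hI2 y hy).2)

theorem EReal.comap_coe_nhdsGT_neBot {a : EReal} (ha : a ≠ ⊤) :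
    (comap ((↑) : ℝ → EReal) (𝓝[>] a)).NeBot := by
  refine comap_neBot fun U hU => ?_
  obtain ⟨u, hau, hsub⟩ := (mem_nhdsGT_iff_exists_Ioo_subset' (lt_top_iff_ne_top.2 ha)).1 hU
  obtain ⟨r, har, hru⟩ := EReal.exists_between_coe_real hau
  exact ⟨r, hsub (show (r : EReal) ∈ Ioo a u from ⟨har, hru⟩)⟩

theorem EReal.eventually_comap_coe_nhdsGT {a : EReal} {t₀ : ℝ} (ht₀ : a < (t₀ : EReal)) :
    ∀ᶠ t : ℝ in comap ((↑) : ℝ → EReal) (𝓝[>] a), a < (t : EReal) ∧ t < t₀ := by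
  have h : Ioo a (t₀ : EReal) ∈ 𝓝[>] a := Ioo_mem_nhdsGT ht₀
  filter_upwards [preimage_mem_comap h] with t ht
  exact ⟨ht.1, EReal.coe_lt_coe_iff.1 ht.2⟩

theorem exists_le_forall_eventually_le {α : Type*} [LinearOrder α] [TopologicalSpace α]
    [OrderClosedTopology α] {I : Set α} {t : α} (ht : t ∈ I) :
    ∃ c ∈ I, c ≤ t ∧ ∀ᶠ x in 𝓝[I] t, c ≤ x := by
  by_cases h : ∃ c ∈ I, c < t
  · obtain ⟨c, hc, hct⟩ := h
    exact ⟨c, hc, hct.le, eventually_nhdsWithin_of_eventually_nhds (eventually_ge_nhds hct)⟩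
  · push Not at h
    exact ⟨t, ht, le_rfl, eventually_nhdsWithin_of_forall h⟩

theorem Set.OrdConnected.exists_Icc_mem_nhdsWithin {α : Type*} [LinearOrder α]
    [TopologicalSpace α] [OrderClosedTopology α] {I : Set α} (hI : I.OrdConnected) {t : α}
    (ht : t ∈ I) : ∃ c d, t ∈ Icc c d ∧ Icc c d ⊆ I ∧ Icc c d ∈ 𝓝[I] t := by
  obtain ⟨c, hc, hct, hc_le⟩ := exists_le_forall_eventually_le ht
  obtain ⟨d, hd, htd, hle_d⟩ := exists_le_forall_eventually_le (α := αᵒᵈ) (I := I) ht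
  exact ⟨c, d, ⟨hct, htd⟩, hI.out hc hd, hc_le.and hle_d⟩

theorem Set.OrdConnected.hasDerivWithinAt_integral {E : Type*} [NormedAddCommGroup E]
    [NormedSpace ℝ E] [CompleteSpace E] {I : Set ℝ} (hI : I.OrdConnected) {l : ℝ → E}
    (hl : ContinuousOn l I) {t₀ t : ℝ} (ht₀ : t₀ ∈ I) (ht : t ∈ I) :
    HasDerivWithinAt (fun u => ∫ τ in t₀..u, l τ) (l t) I t := by
  obtain ⟨c, d, htcd, hcdI, hcd⟩ := hI.exists_Icc_mem_nhdsWithin ht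
  have : Fact (t ∈ Icc c d) := ⟨htcd⟩
  have hlcd := hl.mono hcdI
  exact (intervalIntegral.integral_hasDerivWithinAt_right
    ((hl.mono (hI.uIcc_subset ht₀ ht)).intervalIntegrable)
    (hlcd.stronglyMeasurableAtFilter_nhdsWithin measurableSet_Icc t)
    (hlcd t htcd)).mono_of_mem_nhdsWithin hcd

theorem Set.OrdConnected.integral_eq_sub_of_hasDerivWithinAt {E : Type*} [NormedAddCommGroup E]
    [NormedSpace ℝ E] [CompleteSpace E] {I : Set ℝ} (hI : I.OrdConnected) {u u' : ℝ → E}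
    (hu : ∀ t ∈ I, HasDerivWithinAt u (u' t) I t) (hu' : ContinuousOn u' I)
    {s t : ℝ} (hs : s ∈ I) (ht : t ∈ I) (hst : s ≤ t) :
    ∫ τ in s..t, u' τ = u t - u s := by
  have hIcc : Icc s t ⊆ I := hI.out hs ht
  refine intervalIntegral.integral_eq_sub_of_hasDerivAt_of_le hst
    (fun x hx => (hu x (hIcc hx)).continuousWithinAt.mono hIcc) (fun x hx => ?_)
    ((hu'.mono (hI.uIcc_subset hs ht)).intervalIntegrable)
  exact (hu x (hIcc (Ioo_subset_Icc_self hx))).hasDerivAt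
    (mem_of_superset (Ioo_mem_nhds hx.1 hx.2) (Ioo_subset_Icc_self.trans hIcc))

theorem Set.OrdConnected.re_integral_sub_re_integral {I : Set ℝ} (hI : I.OrdConnected)
    {l : ℝ → ℂ} (hl : ContinuousOn l I) {t₀ s t : ℝ} (ht₀ : t₀ ∈ I) (hs : s ∈ I) (ht : t ∈ I) :
    (∫ τ in t₀..t, l τ).re - (∫ τ in t₀..s, l τ).re = ∫ τ in s..t, (l τ).re := by
  have hint : ∀ {u v}, u ∈ I → v ∈ I → IntervalIntegrable l volume u v := fun hu hv =>
    (hl.mono (hI.uIcc_subset hu hv)).intervalIntegrable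
  rw [← Complex.sub_re, intervalIntegral.integral_interval_sub_left (hint ht₀ ht) (hint ht₀ hs)]
  exact (intervalIntegral.intervalIntegral_re (hint hs ht)).symm

theorem Set.OrdConnected.tendsto_re_integral_atTop {I : Set ℝ} (hI : I.OrdConnected)
    {l : ℝ → ℂ} {M : ℝ → ℝ} (hl : ContinuousOn l I) (hM : ContinuousOn M I)
    (hMl : ∀ τ ∈ I, M τ ≤ -(l τ).re) {t₀ : ℝ} (ht₀ : t₀ ∈ I) {F : Filter ℝ}
    (hFI : ∀ᶠ t in F, t ∈ I ∧ t ≤ t₀) (hMF : Tendsto (fun t => ∫ τ in t..t₀, M τ) F atTop) :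
    Tendsto (fun t => (∫ τ in t₀..t, l τ).re) F atTop := by
  refine tendsto_atTop_mono' _ (hFI.mono fun t ⟨ht, htt₀⟩ => ?_) hMF
  show ∫ τ in t..t₀, M τ ≤ (∫ τ in t₀..t, l τ).re
  have hsub := hI.uIcc_subset ht ht₀
  have hre : (∫ τ in t₀..t, l τ).re = ∫ τ in t₀..t, (l τ).re :=
    (intervalIntegral.intervalIntegral_re (hl.mono hsub).intervalIntegrable.symm).symm
  rw [hre, intervalIntegral.integral_symm t t₀, ← intervalIntegral.integral_neg]
  exact intervalIntegral.integral_mono_on htt₀ (hM.mono hsub).intervalIntegrable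
    ((Complex.continuous_re.comp_continuousOn hl).neg.mono hsub).intervalIntegrable
    fun τ hτ => hMl τ (hI.out ht ht₀ hτ)

theorem measurableSet_ereal_Ioo (a : EReal) (t : ℝ) :
    MeasurableSet {s : ℝ | a < (s : EReal) ∧ s < t} :=
  (measurableSet_lt measurable_const measurable_coe_real_ereal).inter measurableSet_Iio

theorem setIntegral_ereal_Ioo_eq_add {E : Type*} [NormedAddCommGroup E] [NormedSpace ℝ E]
    {a : EReal} {g : ℝ → E} {s t : ℝ} (has : a ≤ s) (hst : s ≤ t)
    (hg : IntegrableOn g {x : ℝ | a < (x : EReal) ∧ x < t}) :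
    ∫ x in {x : ℝ | a < (x : EReal) ∧ x < t}, g x =
      (∫ x in {x : ℝ | a < (x : EReal) ∧ x < s}, g x) + ∫ x in s..t, g x := by
  have hlow : {x : ℝ | a < (x : EReal) ∧ x < t} ∩ Iio s = {x : ℝ | a < (x : EReal) ∧ x < s} := by
    ext x
    exact ⟨fun ⟨⟨hax, _⟩, hxs⟩ => ⟨hax, hxs⟩, fun ⟨hax, hxs⟩ => ⟨⟨hax, hxs.trans_le hst⟩, hxs⟩⟩
  -- `s` itself lies in this set iff `a < s`; in any case the set is a.e. `Ioo s t`.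
  have hup : {x : ℝ | a < (x : EReal) ∧ x < t} \ Iio s =ᵐ[volume] Ioo s t := by
    refine EventuallyLE.antisymm ?_ (LE.le.eventuallyLE ?_)
    · refine (LE.le.eventuallyLE ?_).trans Ioo_ae_eq_Ico.symm.le
      exact fun x ⟨⟨_, hxt⟩, hsx⟩ => ⟨not_lt.1 hsx, hxt⟩
    · exact fun x ⟨hsx, hxt⟩ =>
        ⟨⟨has.trans_lt (EReal.coe_lt_coe_iff.2 hsx), hxt⟩, not_lt.2 hsx.le⟩
  rw [← integral_inter_add_sdiff measurableSet_Iio hg, hlow, intervalIntegral.integral_of_le hst,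
    integral_Ioc_eq_integral_Ioo]
  exact congrArg _ (setIntegral_congr_set hup)

theorem setIntegral_ereal_Ioo_exp_pos {a : EReal} {t : ℝ} (hat : a < (t : EReal)) {f : ℝ → ℝ}
    (hf : IntegrableOn (fun s => Real.exp (f s)) {s : ℝ | a < (s : EReal) ∧ s < t}) :
    0 < ∫ s in {s : ℝ | a < (s : EReal) ∧ s < t}, Real.exp (f s) := by
  obtain ⟨c, hac, hct⟩ := EReal.exists_between_coe_real hat
  rw [setIntegral_pos_iff_support_of_nonneg_ae (ae_of_all _ fun s => (Real.exp_pos _).le) hf]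
  refine (show (0 : ENNReal) < volume (Ioo c t) by
    simpa [Real.volume_Ioo] using EReal.coe_lt_coe_iff.1 hct).trans_le (measure_mono ?_)
  exact fun s hs => ⟨(Real.exp_pos _).ne', hac.trans (EReal.coe_lt_coe_iff.2 hs.1), hs.2⟩

theorem Set.OrdConnected.sub_setIntegral_ereal_Ioo_eq {E : Type*} [NormedAddCommGroup E]
    [NormedSpace ℝ E] [CompleteSpace E] {I : Set ℝ} (hI : I.OrdConnected) {a : EReal}
    (haI : ∀ t ∈ I, a ≤ (t : EReal)) {u g : ℝ → E}
    (hu : ∀ t ∈ I, HasDerivWithinAt u (g t) I t) (hg : ContinuousOn g I)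
    (hg_int : ∀ t ∈ I, IntegrableOn g {x : ℝ | a < (x : EReal) ∧ x < t})
    {s t : ℝ} (hs : s ∈ I) (ht : t ∈ I) :
    u t - ∫ x in {x : ℝ | a < (x : EReal) ∧ x < t}, g x =
      u s - ∫ x in {x : ℝ | a < (x : EReal) ∧ x < s}, g x := by
  wlog hst : s ≤ t generalizing s t
  · exact (this ht hs (le_of_not_ge hst)).symm
  rw [setIntegral_ereal_Ioo_eq_add (haI s hs) hst (hg_int t ht),
    hI.integral_eq_sub_of_hasDerivWithinAt hu hg hs ht hst]
  abel

section Scalar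

variable {I : Set ℝ} {l Λ z : ℝ → ℂ}

theorem Convex.eq_mul_exp_sub_of_hasDerivWithinAt (hI : Convex ℝ I)
    (hΛ : ∀ t ∈ I, HasDerivWithinAt Λ (l t) I t)
    (hz : ∀ t ∈ I, HasDerivWithinAt z (l t * z t) I t) {s t : ℝ} (hs : s ∈ I) (ht : t ∈ I) :
    z t = z s * Complex.exp (Λ t - Λ s) := by
  have hw : ∀ x ∈ I, HasDerivWithinAt (fun x => z x * Complex.exp (-Λ x)) 0 I x := fun x hx =>
    ((hz x hx).mul (hΛ x hx).neg.cexp).congr_deriv (by ring)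
  have hconst : z t * Complex.exp (-Λ t) = z s * Complex.exp (-Λ s) := by
    simpa [sub_eq_zero] using
      hI.norm_image_sub_le_of_norm_hasDerivWithin_le hw (fun _ _ => norm_zero.le) hs ht
  calc z t = z t * Complex.exp (-Λ t) * Complex.exp (Λ t) := by
        rw [mul_assoc, ← Complex.exp_add, neg_add_cancel, Complex.exp_zero, mul_one]
    _ = z s * Complex.exp (Λ t - Λ s) := by
        rw [hconst, mul_assoc, ← Complex.exp_add, neg_add_eq_sub]

theorem Convex.eqOn_zero_of_tendsto_re_atTop (hI : Convex ℝ I)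
    (hΛ : ∀ t ∈ I, HasDerivWithinAt Λ (l t) I t)
    (hz : ∀ t ∈ I, HasDerivWithinAt z (l t * z t) I t) {M : ℝ} (hM : ∀ t ∈ I, ‖z t‖ ≤ M)
    {F : Filter ℝ} [F.NeBot] (hFI : ∀ᶠ t in F, t ∈ I)
    (hΛF : Tendsto (fun t => (Λ t).re) F atTop) : EqOn z 0 I := by
  intro s hs
  by_contra hzs
  have hgrow : Tendsto (fun t => ‖z s‖ * Real.exp ((Λ t).re - (Λ s).re)) F atTop :=
    (Real.tendsto_exp_atTop.comp (tendsto_atTop_add_const_right _ _ hΛF)).const_mul_atTop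
      (norm_pos_iff.2 hzs)
  obtain ⟨t, ht, hMt⟩ := (hFI.and (hgrow.eventually_gt_atTop M)).exists
  have hzt : ‖z t‖ = ‖z s‖ * Real.exp ((Λ t).re - (Λ s).re) := by
    rw [hI.eq_mul_exp_sub_of_hasDerivWithinAt hΛ hz hs ht, norm_mul, Complex.norm_exp,
      Complex.sub_re]
  linarith [hM t ht]

end Scalar

theorem Set.OrdConnected.exists_norm_sub_mul_exp_le {I : Set ℝ} (hI : I.OrdConnected)
    (hne : I.Nonempty) {a : EReal} (haI : ∀ t ∈ I, a ≤ (t : EReal))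
    (hJI : ∀ t ∈ I, {s : ℝ | a < (s : EReal) ∧ s < t} ⊆ I) {l Λ : ℝ → ℂ} {L : ℝ → ℝ}
    (hl : ContinuousOn l I) (hΛ : ∀ t ∈ I, HasDerivWithinAt Λ (l t) I t)
    (hΛL : ∀ s ∈ I, ∀ t ∈ I, s ≤ t → (Λ t).re - (Λ s).re ≤ ∫ τ in s..t, L τ)
    (hker : ∀ t ∈ I, IntegrableOn (fun s => Real.exp (∫ τ in s..t, L τ))
      {s : ℝ | a < (s : EReal) ∧ s < t})
    {ε : ℝ} {φ ψ : ℝ → ℂ} (hφ : ∀ t ∈ I, HasDerivWithinAt φ (ψ t) I t)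
    (hψ : ContinuousOn ψ I) (hb : ∀ t ∈ I, ‖ψ t - l t * φ t‖ ≤ ε) :
    ∃ c : ℂ, ∀ t ∈ I, ‖φ t - c * Complex.exp (Λ t)‖ ≤
      ε * ∫ s in {s : ℝ | a < (s : EReal) ∧ s < t}, Real.exp (∫ τ in s..t, L τ) := by
  set J : ℝ → Set ℝ := fun t => {s : ℝ | a < (s : EReal) ∧ s < t}
  set g : ℝ → ℂ := fun s => (ψ s - l s * φ s) * Complex.exp (-Λ s)
  have hΛc : ContinuousOn Λ I := fun t ht => (hΛ t ht).continuousWithinAt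
  have hφc : ContinuousOn φ I := fun t ht => (hφ t ht).continuousWithinAt
  have hgc : ContinuousOn g I := (hψ.sub (hl.mul hφc)).mul hΛc.neg.cexp
  have hg_le : ∀ t ∈ I, ∀ s ∈ J t,
      ‖g s‖ ≤ Real.exp (-(Λ t).re) * (ε * Real.exp (∫ τ in s..t, L τ)) := by
    intro t ht s hs
    have hsI := hJI t ht hs
    calc ‖g s‖ = ‖ψ s - l s * φ s‖ * Real.exp (-(Λ s).re) := by
          simp only [g, norm_mul, Complex.norm_exp, Complex.neg_re]
      _ ≤ ε * Real.exp (-(Λ t).re + ∫ τ in s..t, L τ) :=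
          mul_le_mul (hb s hsI) (Real.exp_le_exp.2 (by linarith [hΛL s hsI t ht hs.2.le]))
            (Real.exp_nonneg _) ((norm_nonneg _).trans (hb s hsI))
      _ = _ := by rw [Real.exp_add]; ring
  have hg_bound : ∀ t ∈ I, ∀ᵐ s ∂volume.restrict (J t),
      ‖g s‖ ≤ Real.exp (-(Λ t).re) * (ε * Real.exp (∫ τ in s..t, L τ)) := fun t ht =>
    (ae_restrict_iff' (measurableSet_ereal_Ioo a t)).2 (ae_of_all _ (hg_le t ht))
  have hg_int : ∀ t ∈ I, IntegrableOn g (J t) := fun t ht =>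
    (((hker t ht).const_mul ε).const_mul _).mono'
      ((hgc.mono (hJI t ht)).aestronglyMeasurable (measurableSet_ereal_Ioo a t)) (hg_bound t ht)
  have hu : ∀ t ∈ I, HasDerivWithinAt (fun s => φ s * Complex.exp (-Λ s)) (g t) I t :=
    fun t ht => ((hφ t ht).mul (hΛ t ht).neg.cexp).congr_deriv (by simp only [g, Pi.neg_apply]; ring)
  obtain ⟨t₀, ht₀⟩ := hne
  refine ⟨φ t₀ * Complex.exp (-Λ t₀) - ∫ s in J t₀, g s, fun t ht => ?_⟩
  have hc : φ t₀ * Complex.exp (-Λ t₀) - ∫ s in J t₀, g s =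
      φ t * Complex.exp (-Λ t) - ∫ s in J t, g s :=
    hI.sub_setIntegral_ereal_Ioo_eq haI hu hgc hg_int ht ht₀
  rw [hc]
  have hexp : Complex.exp (-Λ t) * Complex.exp (Λ t) = 1 := by
    rw [← Complex.exp_add, neg_add_cancel, Complex.exp_zero]
  calc ‖φ t - (φ t * Complex.exp (-Λ t) - ∫ s in J t, g s) * Complex.exp (Λ t)‖
      = ‖∫ s in J t, g s‖ * Real.exp (Λ t).re := by
        rw [← Complex.norm_exp, ← norm_mul]
        congr 1
        linear_combination (-φ t) * hexp
    _ ≤ (∫ s in J t, Real.exp (-(Λ t).re) * (ε * Real.exp (∫ τ in s..t, L τ))) *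
          Real.exp (Λ t).re := by
        gcongr
        exact norm_integral_le_of_norm_le (((hker t ht).const_mul ε).const_mul _) (hg_bound t ht)
    _ = ε * ∫ s in J t, Real.exp (∫ τ in s..t, L τ) := by
        rw [integral_const_mul, integral_const_mul, mul_comm, ← mul_assoc, ← Real.exp_add,
          add_neg_cancel, Real.exp_zero, one_mul]

section Diagonal

variable {ι : Type*} [Fintype ι] [DecidableEq ι]

theorem hasDerivWithinAt_diagonal_mulVec_iff {d : ℝ → ι → ℂ} {x : ℝ → ι → ℂ} {I : Set ℝ}
    {t : ℝ} :
    HasDerivWithinAt x ((Matrix.diagonal (d t)).mulVec (x t)) I t ↔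
      ∀ i, HasDerivWithinAt (fun s => x s i) (d t i * x t i) I t := by
  simp only [hasDerivWithinAt_pi, Matrix.mulVec_diagonal]

theorem Set.OrdConnected.exists_solution_diagonal_norm_sub_le {I : Set ℝ} (hI : I.OrdConnected)
    (hne : I.Nonempty) {a : EReal} (haI : ∀ t ∈ I, a ≤ (t : EReal))
    (hJI : ∀ t ∈ I, {s : ℝ | a < (s : EReal) ∧ s < t} ⊆ I) {d : ℝ → ι → ℂ} {L : ℝ → ℝ}
    (hd : ∀ i, ContinuousOn (fun t => d t i) I) (hL : ContinuousOn L I)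
    (hdL : ∀ i, ∀ t ∈ I, (d t i).re ≤ L t)
    (hker : ∀ t ∈ I, IntegrableOn (fun s => Real.exp (∫ τ in s..t, L τ))
      {s : ℝ | a < (s : EReal) ∧ s < t})
    {ε : ℝ} {φ φd : ℝ → ι → ℂ} (hφ : ∀ t ∈ I, HasDerivWithinAt φ (φd t) I t)
    (hφd : ContinuousOn φd I) (hb : ∀ t ∈ I, ‖φd t - (Matrix.diagonal (d t)).mulVec (φ t)‖ ≤ ε) :
    ∃ x : ℝ → ι → ℂ, (∀ t ∈ I, HasDerivWithinAt x ((Matrix.diagonal (d t)).mulVec (x t)) I t) ∧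
      ∀ t ∈ I, ‖φ t - x t‖ ≤
        ε * ∫ s in {s : ℝ | a < (s : EReal) ∧ s < t}, Real.exp (∫ τ in s..t, L τ) := by
  obtain ⟨t₀, ht₀⟩ := hne
  have hΛ : ∀ i, ∀ t ∈ I, HasDerivWithinAt (fun u => ∫ τ in t₀..u, d τ i) (d t i) I t :=
    fun i t ht => hI.hasDerivWithinAt_integral (hd i) ht₀ ht
  have hΛL : ∀ i, ∀ s ∈ I, ∀ t ∈ I, s ≤ t →
      (∫ τ in t₀..t, d τ i).re - (∫ τ in t₀..s, d τ i).re ≤ ∫ τ in s..t, L τ := by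
    intro i s hs t ht hst
    rw [hI.re_integral_sub_re_integral (hd i) ht₀ hs ht]
    exact intervalIntegral.integral_mono_on hst
      ((Complex.continuous_re.comp_continuousOn (hd i)).mono
        (hI.uIcc_subset hs ht)).intervalIntegrable
      ((hL.mono (hI.uIcc_subset hs ht)).intervalIntegrable)
      (fun τ hτ => hdL i τ (hI.out hs ht hτ))
  have hb_i : ∀ i, ∀ t ∈ I, ‖φd t i - d t i * φ t i‖ ≤ ε := fun i t ht => by
    simpa [Matrix.mulVec_diagonal] using (norm_le_pi_norm _ i).trans (hb t ht)
  choose c hc using fun i => hI.exists_norm_sub_mul_exp_le ⟨t₀, ht₀⟩ haI hJI (hd i) (hΛ i)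
    (hΛL i) hker (fun t ht => hasDerivWithinAt_pi.1 (hφ t ht) i)
    ((continuous_apply i).comp_continuousOn hφd) (hb_i i)
  refine ⟨fun t i => c i * Complex.exp (∫ τ in t₀..t, d τ i), fun t ht => ?_, fun t ht => ?_⟩
  · refine hasDerivWithinAt_diagonal_mulVec_iff.2 fun i => ?_
    exact ((hΛ i t ht).cexp.const_mul (c i)).congr_deriv (by ring)
  · have hε : 0 ≤ ε := (norm_nonneg _).trans (hb t ht)
    have hκ : 0 ≤ ∫ s in {s : ℝ | a < (s : EReal) ∧ s < t}, Real.exp (∫ τ in s..t, L τ) :=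
      setIntegral_nonneg (measurableSet_ereal_Ioo a t) fun _ _ => (Real.exp_pos _).le
    exact (pi_norm_le_iff_of_nonneg (mul_nonneg hε hκ)).2 fun i => hc i t ht

theorem Convex.eqOn_of_diagonal {I : Set ℝ} (hI : Convex ℝ I) {d : ℝ → ι → ℂ} {Λ : ι → ℝ → ℂ}
    (hΛ : ∀ i, ∀ t ∈ I, HasDerivWithinAt (Λ i) (d t i) I t) {x y : ℝ → ι → ℂ}
    (hx : ∀ t ∈ I, HasDerivWithinAt x ((Matrix.diagonal (d t)).mulVec (x t)) I t)
    (hy : ∀ t ∈ I, HasDerivWithinAt y ((Matrix.diagonal (d t)).mulVec (y t)) I t)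
    {M : ℝ} (hM : ∀ t ∈ I, ‖y t - x t‖ ≤ M) {F : Filter ℝ} [F.NeBot] (hFI : ∀ᶠ t in F, t ∈ I)
    (hΛF : ∀ i, Tendsto (fun t => (Λ i t).re) F atTop) : EqOn y x I := by
  intro t ht
  funext i
  refine sub_eq_zero.1 (hI.eqOn_zero_of_tendsto_re_atTop (z := fun s => y s i - x s i) (hΛ i)
    (fun s hs => ?_) (fun s hs => (norm_le_pi_norm _ i).trans (hM s hs)) hFI (hΛF i) ht)
  exact ((hasDerivWithinAt_diagonal_mulVec_iff.1 (hy s hs) i).sub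
    (hasDerivWithinAt_diagonal_mulVec_iff.1 (hx s hs) i)).congr_deriv (mul_sub _ _ _).symm

end Diagonal

theorem statement4 (a b : EReal) (hab : a < b) (I : Set ℝ)
    (hI1 : ∀ x : ℝ, a < (x : EReal) → (x : EReal) < b → x ∈ I)
    (hI2 : ∀ x ∈ I, a ≤ (x : EReal) ∧ (x : EReal) ≤ b)
    (l1 l2 : ℝ → ℂ) (hl1 : ContinuousOn l1 I) (hl2 : ContinuousOn l2 I)
    (hker : ∀ t ∈ I, IntegrableOn
      (fun s => Real.exp (∫ τ in s..t, max ((l1 τ).re) ((l2 τ).re)))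
      {s : ℝ | a < (s : EReal) ∧ s < t})
    (hbdd : BddAbove (kappa12 a l1 l2 '' I)) :
    UlamStable2C I (fun t => !![l1 t, 0; 0, l2 t]) (sSup (kappa12 a l1 l2 '' I)) ∧
    ((∀ t₀ : ℝ, a < (t₀ : EReal) → (t₀ : EReal) < b →
        Tendsto (fun t => ∫ s in t..t₀, min (-(l1 s).re) (-(l2 s).re))
          (Filter.comap (fun x : ℝ => (x : EReal)) (nhdsWithin a (Ioi a))) atTop) →
      ∀ ε : ℝ, 0 < ε → ∀ φ φd : ℝ → Fin 2 → ℂ,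
        (∀ t ∈ I, HasDerivWithinAt φ (φd t) I t) →
        ContinuousOn φd I →
        (∀ t ∈ I, ‖φd t - (!![l1 t, 0; 0, l2 t]).mulVec (φ t)‖ ≤ ε) →
        ∃ x : ℝ → Fin 2 → ℂ,
          ((∀ t ∈ I, HasDerivWithinAt x ((!![l1 t, 0; 0, l2 t]).mulVec (x t)) I t) ∧
            ∀ t ∈ I, ‖φ t - x t‖ ≤ sSup (kappa12 a l1 l2 '' I) * ε) ∧
          ∀ y : ℝ → Fin 2 → ℂ,
            ((∀ t ∈ I, HasDerivWithinAt y ((!![l1 t, 0; 0, l2 t]).mulVec (y t)) I t) ∧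
              ∀ t ∈ I, ‖φ t - y t‖ ≤ sSup (kappa12 a l1 l2 '' I) * ε) →
            EqOn y x I) := by
  obtain ⟨t₀, ht₀a, ht₀b⟩ := EReal.exists_between_coe_real hab
  have ht₀ : t₀ ∈ I := hI1 t₀ ht₀a ht₀b
  have hI : I.OrdConnected := EReal.ordConnected_of_Ioo_subset_subset_Icc hI1 hI2
  have hd : ∀ i, ContinuousOn (fun t => ![l1 t, l2 t] i) I := Fin.forall_fin_two.2 ⟨hl1, hl2⟩
  have hre : ∀ i, ContinuousOn (fun t => (![l1 t, l2 t] i).re) I := fun i =>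
    Complex.continuous_re.comp_continuousOn (hd i)
  have hκK : ∀ t ∈ I, kappa12 a l1 l2 t ≤ sSup (kappa12 a l1 l2 '' I) := fun t ht =>
    le_csSup hbdd ⟨t, ht, rfl⟩
  have hstable : UlamStable2C I (fun t => !![l1 t, 0; 0, l2 t]) (sSup (kappa12 a l1 l2 '' I)) := by
    refine ⟨(setIntegral_ereal_Ioo_exp_pos ht₀a (hker t₀ ht₀)).trans_le (hκK t₀ ht₀),
      fun ε hε φ φd hφ hφd hb => ?_⟩
    simp only [← Matrix.diagonal_vec2] at hb ⊢
    obtain ⟨x, hx, hxφ⟩ := hI.exists_solution_diagonal_norm_sub_le ⟨t₀, ht₀⟩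
      (fun t ht => (hI2 t ht).1)
      (fun t ht s hs => hI1 s hs.1 ((EReal.coe_lt_coe_iff.2 hs.2).trans_le (hI2 t ht).2))
      hd ((hre 0).sup (hre 1))
      (Fin.forall_fin_two.2 ⟨fun _ _ => le_max_left _ _, fun _ _ => le_max_right _ _⟩)
      hker hφ hφd hb
    exact ⟨x, hx, fun t ht => (hxφ t ht).trans_eq (mul_comm _ _) |>.trans
      (mul_le_mul_of_nonneg_right (hκK t ht) hε.le)⟩
  refine ⟨hstable, fun htend ε hε φ φd hφ hφd hb => ?_⟩
  obtain ⟨x, hx, hxφ⟩ := hstable.2 ε hε φ φd hφ hφd hb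
  refine ⟨x, ⟨hx, hxφ⟩, fun y ⟨hy, hyφ⟩ => ?_⟩
  simp only [← Matrix.diagonal_vec2] at hx hy
  have := EReal.comap_coe_nhdsGT_neBot hab.ne_top
  have hFI : ∀ᶠ t in comap ((↑) : ℝ → EReal) (𝓝[>] a), t ∈ I ∧ t ≤ t₀ :=
    (EReal.eventually_comap_coe_nhdsGT ht₀a).mono fun t ht =>
      ⟨hI1 t ht.1 ((EReal.coe_lt_coe_iff.2 ht.2).trans ht₀b), ht.2.le⟩
  refine hI.convex.eqOn_of_diagonal (fun i t ht => hI.hasDerivWithinAt_integral (hd i) ht₀ ht)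
    hx hy (fun t ht => (norm_sub_le_norm_sub_add_norm_sub _ (φ t) _).trans
      (add_le_add ((norm_sub_rev _ _).trans_le (hyφ t ht)) (hxφ t ht)))
    (hFI.mono fun _ ht => ht.1) fun i => hI.tendsto_re_integral_atTop (hd i)
      ((hre 0).neg.inf (hre 1).neg) ?_ ht₀ hFI (htend t₀ ht₀a ht₀b)
  fin_cases i
  exacts [fun τ _ => min_le_left _ _, fun τ _ => min_le_right _ _]
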